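/- Let d ≥ 1 and β > 0. There is a constant C = C(d,β) > 0 such that for every locally integrable function f : ℝ^d → ℝ and every x ∈ ℝ^d, ∫_{ℝ^d} K₂(x−y) |f(y)| dy ≤ C · M f(x), where K₂(z) = ∫₀¹ (−log √(1−u))^{β/2−1} e^{−|z|²/(2u)} u^{−d/2} du and M f is the centered Hardy–Littlewood maximal function M f(x) = sup_{r>0} (1/|B(x,r)|) ∫_{B(x,r)} |f(y)| dy. -/

import Mathlib

set_option maxHeartbeats 1000000

open MeasureTheory Set Real

/-- The kernel `K₂(z)`. -/
noncomputable def K2 (d : ℕ) (β : ℝ) (z : EuclideanSpace ℝ (Fin d)) : ℝ :=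
  ∫ u in Ioo (0:ℝ) 1,
    (-Real.log (Real.sqrt (1 - u))) ^ (β/2 - 1) * Real.exp (-‖z‖ ^ 2 / (2 * u)) *
      u ^ (-(d:ℝ)/2)

/-- The centered Hardy–Littlewood maximal function
`M f(x) = sup_{r>0} (1/|B(x,r)|) ∫_{B(x,r)} |f(y)| dy`. -/
noncomputable def maximalFn (d : ℕ) (f : EuclideanSpace ℝ (Fin d) → ℝ)
    (x : EuclideanSpace ℝ (Fin d)) : ENNReal :=
  ⨆ (r : ℝ) (_ : 0 < r),
    (volume (Metric.ball x r))⁻¹ * ∫⁻ y in Metric.ball x r, ENNReal.ofReal |f y|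


lemma lint_rpow_lt_top {a : ℝ} (ha : -1 < a) :
    ∫⁻ u in Ioo (0:ℝ) 1, ENNReal.ofReal (u ^ a) < ⊤ := by
  have h : IntervalIntegrable (fun u : ℝ => u ^ a) volume 0 1 :=
    intervalIntegral.intervalIntegrable_rpow' ha
  have h2 : IntegrableOn (fun u : ℝ => u ^ a) (Ioo (0:ℝ) 1) volume :=
    (intervalIntegrable_iff_integrableOn_Ioo_of_le (by norm_num : (0:ℝ) ≤ 1)).1 h
  have h3 := h2.2
  rw [hasFiniteIntegral_iff_ofReal] at h3
  · exact h3
  · exact ae_restrict_of_forall_mem measurableSet_Ioo fun u hu => rpow_nonneg hu.1.le a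

lemma lint_one_sub_rpow_lt_top {a : ℝ} (ha : -1 < a) :
    ∫⁻ u in Ioo (0:ℝ) 1, ENNReal.ofReal ((1 - u) ^ a) < ⊤ := by
  have mp : MeasurePreserving (fun t : ℝ => 1 - t) volume volume :=
    Measure.measurePreserving_sub_left volume 1
  have emb : MeasurableEmbedding (fun t : ℝ => 1 - t) :=
    (Homeomorph.subLeft (1:ℝ)).measurableEmbedding
  rw [mp.setLIntegral_comp_emb emb (fun v => ENNReal.ofReal (v ^ a)) (Ioo (0:ℝ) 1),
    show (fun t : ℝ => 1 - t) '' Ioo (0:ℝ) 1 = Ioo (0:ℝ) 1 by rw [image_const_sub_Ioo]; norm_num]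
  exact lint_rpow_lt_top ha

lemma g_bound_pos {β : ℝ} (hc : 0 ≤ β/2 - 1) {u : ℝ} (hu : u ∈ Ioo (0:ℝ) 1) :
    (-Real.log (Real.sqrt (1-u))) ^ (β/2-1)
      ≤ (4*(β/2-1)+1) ^ (β/2-1) * (1-u) ^ (-(1/8):ℝ) := by
  set a := β/2 - 1
  set t := -Real.log (Real.sqrt (1-u)) with htd
  have h1u : 0 < 1 - u := by linarith [hu.2]
  have hteq : t = -(Real.log (1-u) / 2) := by rw [htd, log_sqrt h1u.le]
  have ht0 : 0 ≤ t := by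
    rw [hteq]
    have := log_nonpos h1u.le (by linarith [hu.1])
    linarith
  set m : ℝ := 4*a + 1 with hm
  have hm0 : 0 < m := by positivity
  have h1 : t ≤ m * Real.exp (t/m) := by
    have := Real.add_one_le_exp (t/m)
    have h2 : t/m ≤ Real.exp (t/m) := by linarith
    calc t = m * (t/m) := by field_simp
    _ ≤ m * Real.exp (t/m) := by nlinarith
  have h2 : t ^ a ≤ (m * Real.exp (t/m)) ^ a := rpow_le_rpow ht0 h1 hc
  have h3 : (m * Real.exp (t/m)) ^ a = m ^ a * Real.exp (t/m) ^ a :=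
    mul_rpow hm0.le (exp_nonneg _)
  have h4 : Real.exp (t/m) ^ a = Real.exp (t/m*a) := by
    rw [exp_mul]
  have h5 : Real.exp (t/m*a) ≤ Real.exp (t/4) := by
    apply Real.exp_le_exp.2
    rw [div_mul_eq_mul_div, mul_comm]
    rw [div_le_div_iff₀ hm0 (by norm_num)]
    nlinarith
  have h6 : Real.exp (t/4) = (1-u) ^ (-(1/8):ℝ) := by
    rw [rpow_def_of_pos h1u, hteq]
    congr 1
    ring
  calc t ^ a ≤ m ^ a * Real.exp (t/m) ^ a := by rw [← h3]; exact h2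
  _ = m ^ a * Real.exp (t/m*a) := by rw [h4]
  _ ≤ m ^ a * Real.exp (t/4) := by
      have : (0:ℝ) ≤ m ^ a := rpow_nonneg hm0.le a
      nlinarith
  _ = m ^ a * (1-u) ^ (-(1/8):ℝ) := by rw [h6]

lemma g_bound_neg {β : ℝ} (hβ : 0 < β) (hc : β/2 - 1 < 0) {u : ℝ} (hu : u ∈ Ioo (0:ℝ) 1) :
    (-Real.log (Real.sqrt (1-u))) ^ (β/2-1)
      ≤ ((1:ℝ)/2) ^ (β/2-1) * u ^ (β/2-1) := by
  set a := β/2 - 1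
  set t := -Real.log (Real.sqrt (1-u)) with htd
  have h1u : 0 < 1 - u := by linarith [hu.2]
  have hteq : t = -(Real.log (1-u) / 2) := by rw [htd, log_sqrt h1u.le]
  have hlog : Real.log (1-u) ≤ -u := by
    have := log_le_sub_one_of_pos h1u
    linarith
  have ht : u/2 ≤ t := by rw [hteq]; linarith
  have hu2 : 0 < u/2 := by linarith [hu.1]
  have := rpow_le_rpow_of_nonpos hu2 ht hc.le
  calc t ^ a ≤ (u/2) ^ a := this
  _ = (u * (1/2)) ^ a := by ring_nf
  _ = u ^ a * ((1:ℝ)/2) ^ a := mul_rpow hu.1.le (by norm_num)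
  _ = ((1:ℝ)/2) ^ a * u ^ a := by ring

lemma lintegral_g_lt_top {β : ℝ} (hβ : 0 < β) :
    ∫⁻ u in Ioo (0:ℝ) 1, ENNReal.ofReal ((-Real.log (Real.sqrt (1-u))) ^ (β/2-1)) < ⊤ := by
  have ha : -1 < β/2 - 1 := by linarith
  have hrw : ∀ a : ℝ, (c : ℝ) → 0 ≤ c → True := fun _ _ _ => trivial
  rcases le_or_gt 0 (β/2-1) with hc | hc
  · calc ∫⁻ u in Ioo (0:ℝ) 1, ENNReal.ofReal ((-Real.log (Real.sqrt (1-u))) ^ (β/2-1))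
        ≤ ∫⁻ u in Ioo (0:ℝ) 1,
            ENNReal.ofReal ((4*(β/2-1)+1) ^ (β/2-1)) * ENNReal.ofReal ((1-u) ^ (-(1/8):ℝ)) := by
          apply lintegral_mono_ae
          refine ae_restrict_of_forall_mem measurableSet_Ioo fun u hu => ?_
          rw [← ENNReal.ofReal_mul (rpow_nonneg (by positivity) _)]
          exact ENNReal.ofReal_le_ofReal (g_bound_pos hc hu)
    _ = ENNReal.ofReal ((4*(β/2-1)+1) ^ (β/2-1)) *
          ∫⁻ u in Ioo (0:ℝ) 1, ENNReal.ofReal ((1-u) ^ (-(1/8):ℝ)) :=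
          lintegral_const_mul' _ _ ENNReal.ofReal_ne_top
    _ < ⊤ := ENNReal.mul_lt_top ENNReal.ofReal_lt_top (lint_one_sub_rpow_lt_top (by norm_num))
  · calc ∫⁻ u in Ioo (0:ℝ) 1, ENNReal.ofReal ((-Real.log (Real.sqrt (1-u))) ^ (β/2-1))
        ≤ ∫⁻ u in Ioo (0:ℝ) 1,
            ENNReal.ofReal (((1:ℝ)/2) ^ (β/2-1)) * ENNReal.ofReal (u ^ (β/2-1)) := by
          apply lintegral_mono_ae
          refine ae_restrict_of_forall_mem measurableSet_Ioo fun u hu => ?_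
          rw [← ENNReal.ofReal_mul (rpow_nonneg (by norm_num) _)]
          exact ENNReal.ofReal_le_ofReal (g_bound_neg hβ hc hu)
    _ = ENNReal.ofReal (((1:ℝ)/2) ^ (β/2-1)) *
          ∫⁻ u in Ioo (0:ℝ) 1, ENNReal.ofReal (u ^ (β/2-1)) :=
          lintegral_const_mul' _ _ ENNReal.ofReal_ne_top
    _ < ⊤ := ENNReal.mul_lt_top ENNReal.ofReal_lt_top (lint_rpow_lt_top ha)

lemma sum_gauss_lt_top (d : ℕ) :
    ∑' k : ℕ, ENNReal.ofReal (Real.exp (-(k:ℝ)^2/2) * ((k:ℝ)+1)^d) < ⊤ := by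
  have hr0 : (0:ℝ) < Real.exp (-(1/2 : ℝ)) := Real.exp_pos _
  have hr1 : ‖Real.exp (-(1/2 : ℝ))‖ < 1 := by
    rw [Real.norm_eq_abs, abs_of_pos hr0]
    exact Real.exp_lt_one_iff.2 (by norm_num)
  have hgeo : Summable (fun n : ℕ => (n:ℝ)^d * Real.exp (-(1/2 : ℝ))^n) :=
    summable_pow_mul_geometric_of_norm_lt_one d hr1
  have hshift : Summable (fun n : ℕ => ((n+1:ℕ):ℝ)^d * Real.exp (-(1/2 : ℝ))^(n+1)) :=
    (summable_nat_add_iff 1).2 hgeo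
  have hS : Summable (fun n : ℕ => ((n:ℝ)+1)^d * Real.exp (-(1/2 : ℝ))^n) := by
    have h2 := hshift.mul_left (Real.exp (-(1/2 : ℝ)))⁻¹
    refine h2.congr fun n => ?_
    push_cast
    rw [pow_succ]
    field_simp
  have hcmp : Summable (fun k : ℕ => Real.exp (-(k:ℝ)^2/2) * ((k:ℝ)+1)^d) := by
    refine Summable.of_nonneg_of_le (fun k => by positivity) (fun k => ?_) hS
    have hk2 : (k:ℝ) ≤ (k:ℝ)^2 := by
      rcases Nat.eq_zero_or_pos k with h | h
      · simp [h]
      · have h1 : (1:ℝ) ≤ (k:ℝ) := by exact_mod_cast h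
        nlinarith
    have h1 : Real.exp (-(k:ℝ)^2/2) ≤ Real.exp (-(1/2 : ℝ))^k := by
      rw [← Real.exp_nat_mul]
      apply Real.exp_le_exp.2
      nlinarith
    have h2 : (0:ℝ) ≤ ((k:ℝ)+1)^d := by positivity
    have h3 : (0:ℝ) ≤ Real.exp (-(k:ℝ)^2/2) := (Real.exp_pos _).le
    calc Real.exp (-(k:ℝ)^2/2) * ((k:ℝ)+1)^d
        ≤ Real.exp (-(1/2 : ℝ))^k * ((k:ℝ)+1)^d := by nlinarith
      _ = ((k:ℝ)+1)^d * Real.exp (-(1/2 : ℝ))^k := by ring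
  rw [← ENNReal.ofReal_tsum_of_nonneg (fun k => by positivity) hcmp]
  exact ENNReal.ofReal_lt_top



lemma ball_lint_le (d : ℕ) (hd : 1 ≤ d) (f : EuclideanSpace ℝ (Fin d) → ℝ)
    (x : EuclideanSpace ℝ (Fin d)) {r : ℝ} (hr : 0 < r) :
    ∫⁻ y in Metric.ball x r, ENNReal.ofReal |f y|
      ≤ volume (Metric.ball x r) * maximalFn d f x := by
  haveI : Nonempty (Fin d) := ⟨⟨0, hd⟩⟩
  have v0 : volume (Metric.ball x r) ≠ 0 := (Metric.measure_ball_pos volume x hr).ne'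
  have vt : volume (Metric.ball x r) ≠ ⊤ := measure_ball_lt_top.ne
  have h : (volume (Metric.ball x r))⁻¹ * ∫⁻ y in Metric.ball x r, ENNReal.ofReal |f y|
      ≤ maximalFn d f x := by
    exact le_iSup₂ (f := fun r (_ : 0 < r) =>
      (volume (Metric.ball x r))⁻¹ * ∫⁻ y in Metric.ball x r, ENNReal.ofReal |f y|) r hr
  calc ∫⁻ y in Metric.ball x r, ENNReal.ofReal |f y|
      = volume (Metric.ball x r) *
        ((volume (Metric.ball x r))⁻¹ * ∫⁻ y in Metric.ball x r, ENNReal.ofReal |f y|) := by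
        rw [← mul_assoc, ENNReal.mul_inv_cancel v0 vt, one_mul]
    _ ≤ volume (Metric.ball x r) * maximalFn d f x := mul_le_mul_right h _

lemma gauss_le_sum (d : ℕ) (x y : EuclideanSpace ℝ (Fin d)) {u : ℝ} (hu : 0 < u) :
    ENNReal.ofReal (Real.exp (-‖x - y‖^2 / (2*u)))
      ≤ ∑' k : ℕ, ENNReal.ofReal (Real.exp (-(k:ℝ)^2/2)) *
          (Metric.ball x (((k:ℝ)+1) * Real.sqrt u)).indicator (fun _ => (1:ENNReal)) y := by
  set k : ℕ := ⌊‖x - y‖ / Real.sqrt u⌋₊ with hk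
  have hsu : 0 < Real.sqrt u := Real.sqrt_pos.2 hu
  have hnn : 0 ≤ ‖x - y‖ / Real.sqrt u := by positivity
  have hfl : (k:ℝ) ≤ ‖x - y‖ / Real.sqrt u := Nat.floor_le hnn
  have hub : ‖x - y‖ / Real.sqrt u < (k:ℝ) + 1 := Nat.lt_floor_add_one _
  have hmem : y ∈ Metric.ball x (((k:ℝ)+1) * Real.sqrt u) := by
    rw [Metric.mem_ball, dist_comm, dist_eq_norm]
    calc ‖x - y‖ = (‖x - y‖ / Real.sqrt u) * Real.sqrt u := by field_simp
      _ < ((k:ℝ)+1) * Real.sqrt u := by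
          exact mul_lt_mul_of_pos_right hub hsu
  have hexp : Real.exp (-‖x - y‖^2 / (2*u)) ≤ Real.exp (-(k:ℝ)^2/2) := by
    apply Real.exp_le_exp.2
    rw [neg_div, neg_div, neg_le_neg_iff]
    have h1 : (k:ℝ) * Real.sqrt u ≤ ‖x - y‖ := by
      rw [← le_div_iff₀ hsu] at *
      exact hfl
    have h2 : ((k:ℝ) * Real.sqrt u)^2 ≤ ‖x - y‖^2 := by
      apply sq_le_sq' <;> nlinarith [norm_nonneg (x - y), Nat.cast_nonneg (α := ℝ) k]
    have h3 : ((k:ℝ) * Real.sqrt u)^2 = (k:ℝ)^2 * u := by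
      rw [mul_pow, Real.sq_sqrt hu.le]
    rw [div_le_div_iff₀ (by norm_num) (by positivity)]
    nlinarith
  calc ENNReal.ofReal (Real.exp (-‖x - y‖^2 / (2*u)))
      ≤ ENNReal.ofReal (Real.exp (-(k:ℝ)^2/2)) *
          (Metric.ball x (((k:ℝ)+1) * Real.sqrt u)).indicator (fun _ => (1:ENNReal)) y := by
        rw [Set.indicator_of_mem hmem, mul_one]
        exact ENNReal.ofReal_le_ofReal hexp
    _ ≤ _ := ENNReal.le_tsum k
lemma gauss_conv_le (d : ℕ) (hd : 1 ≤ d) (f : EuclideanSpace ℝ (Fin d) → ℝ)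
    (hf : AEMeasurable f volume) (x : EuclideanSpace ℝ (Fin d)) {u : ℝ} (hu : 0 < u) :
    ∫⁻ y, ENNReal.ofReal (Real.exp (-‖x - y‖^2 / (2*u))) * ENNReal.ofReal |f y|
      ≤ (∑' k : ℕ, ENNReal.ofReal (Real.exp (-(k:ℝ)^2/2) * ((k:ℝ)+1)^d))
        * ENNReal.ofReal (u ^ ((d:ℝ)/2)) * volume (Metric.ball (0:EuclideanSpace ℝ (Fin d)) 1)
        * maximalFn d f x := by
  haveI : Nonempty (Fin d) := ⟨⟨0, hd⟩⟩
  set V := volume (Metric.ball (0:EuclideanSpace ℝ (Fin d)) 1) with hV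
  set M := maximalFn d f x with hM
  set c : ℕ → ENNReal := fun k => ENNReal.ofReal (Real.exp (-(k:ℝ)^2/2)) with hc
  set r : ℕ → ℝ := fun k => ((k:ℝ)+1) * Real.sqrt u with hr
  have hrpos : ∀ k, 0 < r k := fun k => by
    have : 0 < Real.sqrt u := Real.sqrt_pos.2 hu
    positivity
  set B : ℕ → Set (EuclideanSpace ℝ (Fin d)) := fun k => Metric.ball x (r k) with hB
  have hhm : AEMeasurable (fun y : EuclideanSpace ℝ (Fin d) => ENNReal.ofReal |f y|) volume := by
    simp only [← Real.norm_eq_abs]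
    exact ENNReal.measurable_ofReal.comp_aemeasurable hf.norm
  have hsqd : (Real.sqrt u)^d = u ^ ((d:ℝ)/2) := by
    rw [Real.sqrt_eq_rpow, ← Real.rpow_natCast (u ^ (1/(2:ℝ))) d, ← Real.rpow_mul hu.le]
    congr 1
    ring
  have hvol : ∀ k, volume (B k) = ENNReal.ofReal (((k:ℝ)+1)^d) * ENNReal.ofReal (u ^ ((d:ℝ)/2)) * V := by
    intro k
    show volume (Metric.ball x (r k)) = _
    rw [Measure.addHaar_ball volume x (hrpos k).le, finrank_euclideanSpace_fin, hr]
    rw [mul_pow, hsqd, ENNReal.ofReal_mul (by positivity)]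
  calc ∫⁻ y, ENNReal.ofReal (Real.exp (-‖x - y‖^2 / (2*u))) * ENNReal.ofReal |f y|
      ≤ ∫⁻ y, (∑' k, c k * (B k).indicator (fun _ => (1:ENNReal)) y) * ENNReal.ofReal |f y| := by
        refine lintegral_mono fun y => mul_le_mul_left (gauss_le_sum d x y hu) _
    _ = ∫⁻ y, ∑' k, c k * (B k).indicator (fun _ => (1:ENNReal)) y * ENNReal.ofReal |f y| := by
        exact lintegral_congr fun y => (ENNReal.tsum_mul_right).symm
    _ = ∑' k, ∫⁻ y, c k * (B k).indicator (fun _ => (1:ENNReal)) y * ENNReal.ofReal |f y| := by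
        refine lintegral_tsum fun k => ?_
        exact ((measurable_const.indicator measurableSet_ball).aemeasurable.const_mul _).mul hhm
    _ = ∑' k, c k * ∫⁻ y in B k, ENNReal.ofReal |f y| := by
        refine tsum_congr fun k => ?_
        have step : ∀ y, c k * (B k).indicator (fun _ => (1:ENNReal)) y * ENNReal.ofReal |f y|
            = c k * (B k).indicator (fun y => ENNReal.ofReal |f y|) y := by
          intro y; by_cases hy : y ∈ B k <;> simp [hy]
        simp_rw [step]
        rw [lintegral_const_mul' _ _ ENNReal.ofReal_ne_top, lintegral_indicator measurableSet_ball]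
    _ ≤ ∑' k, c k * (volume (B k) * M) := by
        exact ENNReal.tsum_le_tsum fun k =>
          mul_le_mul_right (ball_lint_le d hd f x (hrpos k)) _
    _ = ∑' k : ℕ, (ENNReal.ofReal (Real.exp (-(k:ℝ)^2/2) * ((k:ℝ)+1)^d)
          * ENNReal.ofReal (u ^ ((d:ℝ)/2)) * V) * M := by
        refine tsum_congr fun k => ?_
        rw [hvol k, ENNReal.ofReal_mul (by positivity : (0:ℝ) ≤ Real.exp (-(k:ℝ)^2/2))]
        ring
    _ = (∑' k : ℕ, ENNReal.ofReal (Real.exp (-(k:ℝ)^2/2) * ((k:ℝ)+1)^d))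
          * ENNReal.ofReal (u ^ ((d:ℝ)/2)) * V * M := by
        rw [ENNReal.tsum_mul_right, ENNReal.tsum_mul_right, ENNReal.tsum_mul_right]


/-- `∫_{ℝ^d} K₂(x−y)|f(y)| dy ≤ C · M f(x)`. -/
theorem K2_conv_le_maximal (d : ℕ) (hd : 1 ≤ d) (β : ℝ) (hβ : 0 < β) :
    ∃ C : ℝ, 0 < C ∧ ∀ f : EuclideanSpace ℝ (Fin d) → ℝ,
      LocallyIntegrable f volume → ∀ x : EuclideanSpace ℝ (Fin d),
      ∫⁻ y, ENNReal.ofReal (K2 d β (x - y) * |f y|)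
        ≤ ENNReal.ofReal C * maximalFn d f x := by
  haveI : Nonempty (Fin d) := ⟨⟨0, hd⟩⟩
  set gE : ℝ → ENNReal :=
    fun u => ENNReal.ofReal ((-Real.log (Real.sqrt (1-u))) ^ (β/2-1)) with hgE
  set A : ENNReal := ∫⁻ u in Ioo (0:ℝ) 1, gE u with hA
  set S : ENNReal := ∑' k : ℕ, ENNReal.ofReal (Real.exp (-(k:ℝ)^2/2) * ((k:ℝ)+1)^d) with hS
  set V : ENNReal := volume (Metric.ball (0:EuclideanSpace ℝ (Fin d)) 1) with hV
  have hAt : A ≠ ⊤ := (lintegral_g_lt_top hβ).ne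
  have hSt : S ≠ ⊤ := (sum_gauss_lt_top d).ne
  have hVt : V ≠ ⊤ := measure_ball_lt_top.ne
  have hTt : A * S * V ≠ ⊤ := ENNReal.mul_ne_top (ENNReal.mul_ne_top hAt hSt) hVt
  refine ⟨(A * S * V).toReal + 1, by positivity, fun f hloc x => ?_⟩
  have hmf : AEMeasurable f volume := hloc.aestronglyMeasurable.aemeasurable
  have hC : A * S * V ≤ ENNReal.ofReal ((A * S * V).toReal + 1) :=
    le_trans (le_of_eq (ENNReal.ofReal_toReal hTt).symm)
      (ENNReal.ofReal_le_ofReal (by linarith))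
  set M : ENNReal := maximalFn d f x with hM
  -- measurability of gE
  have hgEm : Measurable gE := by
    apply ENNReal.measurable_ofReal.comp
    exact (((Real.measurable_log.comp
      (Real.continuous_sqrt.measurable.comp (measurable_const.sub measurable_id))).neg).pow_const _)
  -- nonnegativity of the K2 integrand on Ioo 0 1
  have hnn : ∀ z : EuclideanSpace ℝ (Fin d), ∀ u ∈ Ioo (0:ℝ) 1,
      0 ≤ (-Real.log (Real.sqrt (1-u))) ^ (β/2-1) * Real.exp (-‖z‖^2 / (2*u)) *
        u ^ (-(d:ℝ)/2) := by
    intro z u hu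
    have h1 : 0 ≤ -Real.log (Real.sqrt (1-u)) := by
      have : Real.sqrt (1-u) ≤ 1 := Real.sqrt_le_one.mpr (by linarith [hu.1])
      have := Real.log_nonpos (Real.sqrt_nonneg _) this
      linarith
    have h2 : (0:ℝ) ≤ u := hu.1.le
    positivity
  have hK2nn : ∀ z : EuclideanSpace ℝ (Fin d), 0 ≤ K2 d β z := fun z =>
    setIntegral_nonneg measurableSet_Ioo (hnn z)
  -- pointwise bound on ofReal (K2 z)
  have hK : ∀ z : EuclideanSpace ℝ (Fin d), ENNReal.ofReal (K2 d β z) ≤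
      ∫⁻ u in Ioo (0:ℝ) 1, gE u * ENNReal.ofReal (Real.exp (-‖z‖^2 / (2*u))) *
        ENNReal.ofReal (u ^ (-(d:ℝ)/2)) := by
    intro z
    by_cases hI : IntegrableOn (fun u : ℝ =>
        (-Real.log (Real.sqrt (1-u))) ^ (β/2-1) * Real.exp (-‖z‖^2 / (2*u)) *
          u ^ (-(d:ℝ)/2)) (Ioo (0:ℝ) 1) volume
    · rw [show K2 d β z = ∫ u in Ioo (0:ℝ) 1,
        (-Real.log (Real.sqrt (1-u))) ^ (β/2-1) * Real.exp (-‖z‖^2 / (2*u)) *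
          u ^ (-(d:ℝ)/2) from rfl]
      rw [ofReal_integral_eq_lintegral_ofReal hI
        (ae_restrict_of_forall_mem measurableSet_Ioo (hnn z))]
      apply le_of_eq
      apply lintegral_congr_ae
      refine ae_restrict_of_forall_mem measurableSet_Ioo fun u hu => ?_
      beta_reduce
      have h1 : 0 ≤ -Real.log (Real.sqrt (1-u)) := by
        have : Real.sqrt (1-u) ≤ 1 := Real.sqrt_le_one.mpr (by linarith [hu.1])
        have := Real.log_nonpos (Real.sqrt_nonneg _) this
        linarith
      rw [ENNReal.ofReal_mul (by positivity), ENNReal.ofReal_mul (by positivity)]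
    · rw [show K2 d β z = ∫ u in Ioo (0:ℝ) 1,
        (-Real.log (Real.sqrt (1-u))) ^ (β/2-1) * Real.exp (-‖z‖^2 / (2*u)) *
          u ^ (-(d:ℝ)/2) from rfl]
      rw [integral_undef hI]
      simp
  -- main chain
  calc ∫⁻ y, ENNReal.ofReal (K2 d β (x - y) * |f y|)
      ≤ ∫⁻ y, ∫⁻ u in Ioo (0:ℝ) 1,
          gE u * ENNReal.ofReal (Real.exp (-‖x - y‖^2 / (2*u))) *
            ENNReal.ofReal (u ^ (-(d:ℝ)/2)) * ENNReal.ofReal |f y| := by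
        refine lintegral_mono fun y => ?_
        rw [ENNReal.ofReal_mul (hK2nn _),
          lintegral_mul_const' (ENNReal.ofReal |f y|) _ ENNReal.ofReal_ne_top]
        exact mul_le_mul_left (hK _) _
    _ = ∫⁻ u in Ioo (0:ℝ) 1, ∫⁻ y,
          gE u * ENNReal.ofReal (Real.exp (-‖x - y‖^2 / (2*u))) *
            ENNReal.ofReal (u ^ (-(d:ℝ)/2)) * ENNReal.ofReal |f y| := by
        apply lintegral_lintegral_swap
        apply AEMeasurable.fun_mul
        · apply AEMeasurable.fun_mul
          · apply AEMeasurable.fun_mul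
            · exact (hgEm.comp measurable_snd).aemeasurable
            · apply Measurable.aemeasurable
              apply ENNReal.measurable_ofReal.comp
              apply Real.continuous_exp.measurable.comp
              apply Measurable.div
              · exact ((measurable_const.sub measurable_fst).norm.pow_const 2).neg
              · exact measurable_snd.const_mul 2
          · exact (ENNReal.measurable_ofReal.comp
              (measurable_snd.pow_const _)).aemeasurable
        · have hhm : AEMeasurable (fun y : EuclideanSpace ℝ (Fin d) =>
              ENNReal.ofReal |f y|) volume := by
            simp only [← Real.norm_eq_abs]
            exact ENNReal.measurable_ofReal.comp_aemeasurable hmf.norm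
          exact hhm.comp_quasiMeasurePreserving Measure.quasiMeasurePreserving_fst
    _ ≤ ∫⁻ u in Ioo (0:ℝ) 1, gE u * (S * V * M) := by
        apply lintegral_mono_ae
        refine ae_restrict_of_forall_mem measurableSet_Ioo fun u hu => ?_
        have hu0 : 0 < u := hu.1
        have hcancel : ENNReal.ofReal (u ^ (-(d:ℝ)/2)) * ENNReal.ofReal (u ^ ((d:ℝ)/2))
            = 1 := by
          rw [← ENNReal.ofReal_mul (Real.rpow_nonneg hu0.le _), ← Real.rpow_add hu0]
          rw [show -(d:ℝ)/2 + (d:ℝ)/2 = 0 by ring, Real.rpow_zero]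
          norm_num
        calc ∫⁻ y, gE u * ENNReal.ofReal (Real.exp (-‖x - y‖^2 / (2*u))) *
              ENNReal.ofReal (u ^ (-(d:ℝ)/2)) * ENNReal.ofReal |f y|
            = (gE u * ENNReal.ofReal (u ^ (-(d:ℝ)/2))) *
              ∫⁻ y, ENNReal.ofReal (Real.exp (-‖x - y‖^2 / (2*u))) *
                ENNReal.ofReal |f y| := by
              rw [← lintegral_const_mul' _ _
                (ENNReal.mul_ne_top ENNReal.ofReal_ne_top ENNReal.ofReal_ne_top)]
              apply lintegral_congr fun y => by ring
          _ ≤ (gE u * ENNReal.ofReal (u ^ (-(d:ℝ)/2))) *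
              (S * ENNReal.ofReal (u ^ ((d:ℝ)/2)) * V * M) :=
              mul_le_mul_right (gauss_conv_le d hd f hmf x hu0) _
          _ = gE u * (S * V * M) *
              (ENNReal.ofReal (u ^ (-(d:ℝ)/2)) * ENNReal.ofReal (u ^ ((d:ℝ)/2))) := by
              ring
          _ = gE u * (S * V * M) := by rw [hcancel, mul_one]
    _ = A * (S * V * M) := lintegral_mul_const _ hgEm
    _ = (A * S * V) * M := by ring
    _ ≤ ENNReal.ofReal ((A * S * V).toReal + 1) * M := mul_le_mul_left hC _
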